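/- Let k > 0 and R₀ ∈ (0, π/√k), and define R : ℝ → ℝ by R(t) = (2/√k)·arcsin(exp(−k·t/2)·sin(√k·R₀/2)). Then R(0) = R₀ and, for every t ≥ 0, R is differentiable at t with derivative R'(t) = −√k · tan(√k·R(t)/2). (This is the deterministic distance process of the synchronous coupling of Brownian motions on a surface of constant curvature k > 0: dR_t = −√k tan(√k R_t/2) dt.) -/

import Mathlib

/-! With `s = √k` and `a = sin (s R₀ / 2)`, the process is `R = (2/s) arcsin u` for
`u t = e^{-kt/2} a`. Since `u' = -(k/2) u`, the chain rule gives
`(arcsin u)' = -(k/2) u / √(1 - u²) = -(k/2) tan (arcsin u)`, and `arcsin u = s R / 2`.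
The chain rule applies because `|u t| ≤ |a| < 1` for `t ≥ 0`, as `s R₀ / 2 ∈ (0, π/2)`. -/

open Real Set

theorem abs_sin_lt_one_of_mem_Ioo {θ : ℝ} (hθ : θ ∈ Ioo (-(π / 2)) (π / 2)) : |sin θ| < 1 := by
  have hcos : 0 < cos θ := cos_pos_of_mem_Ioo hθ
  rw [← sq_lt_one_iff_abs_lt_one, ← sin_sq_add_cos_sq θ]
  linarith [pow_pos hcos 2]

theorem abs_exp_mul_lt_one {x a : ℝ} (hx : x ≤ 0) (ha : |a| < 1) : |exp x * a| < 1 := by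
  rw [abs_mul, abs_of_pos (exp_pos x)]
  calc exp x * |a| ≤ 1 * |a| := by gcongr; exact exp_le_one_iff.mpr hx
    _ < 1 := by rwa [one_mul]

theorem hasDerivAt_arcsin_exp_mul {c a t : ℝ} (h : |exp (c * t) * a| < 1) :
    HasDerivAt (fun t => arcsin (exp (c * t) * a)) (c * tan (arcsin (exp (c * t) * a))) t := by
  obtain ⟨h₁, h₂⟩ := abs_lt.mp h
  have hu : HasDerivAt (fun t => exp (c * t) * a) (exp (c * t) * c * a) t := by
    simpa using (((hasDerivAt_id t).const_mul c).exp).mul_const a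
  refine ((hasDerivAt_arcsin h₁.ne' h₂.ne).comp t hu).congr_deriv ?_
  rw [tan_arcsin]
  ring

theorem synchronous_coupling_distance (k R₀ : ℝ) (hk : 0 < k)
    (hR₀ : R₀ ∈ Set.Ioo 0 (Real.pi / Real.sqrt k)) (R : ℝ → ℝ)
    (hR : ∀ t, R t =
      2 / Real.sqrt k * Real.arcsin (Real.exp (-(k * t) / 2) * Real.sin (Real.sqrt k * R₀ / 2))) :
    R 0 = R₀ ∧
      ∀ t ≥ (0 : ℝ), HasDerivAt R (-Real.sqrt k * Real.tan (Real.sqrt k * R t / 2)) t := by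
  have hs : 0 < √k := sqrt_pos.mpr hk
  obtain ⟨hR₀pos, hR₀lt⟩ := hR₀
  have hθ : √k * R₀ / 2 ∈ Ioo (-(π / 2)) (π / 2) := by
    rw [lt_div_iff₀ hs] at hR₀lt
    constructor <;> nlinarith [pi_pos]
  have hR' : R = fun t => 2 / √k * arcsin (exp (-(k / 2) * t) * sin (√k * R₀ / 2)) := by
    funext t
    rw [hR t]
    congr 4
    ring
  refine ⟨?_, fun t ht => ?_⟩
  · rw [hR 0]
    simp only [mul_zero, neg_zero, zero_div, exp_zero, one_mul, arcsin_sin hθ.1.le hθ.2.le]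
    field_simp
  · have hu := abs_exp_mul_lt_one (by nlinarith : -(k / 2) * t ≤ 0) (abs_sin_lt_one_of_mem_Ioo hθ)
    have hR_t : √k * R t / 2 = arcsin (exp (-(k / 2) * t) * sin (√k * R₀ / 2)) := by
      rw [hR']
      field_simp
    rw [hR_t, hR']
    refine ((hasDerivAt_arcsin_exp_mul hu).const_mul (2 / √k)).congr_deriv ?_
    field_simp
    rw [sq_sqrt hk.le]
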